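/- arXiv:2211.04078 — 2 statements merged into one kernel-verified Lean document; each statement's English description precedes it below -/
import Mathlib

section
/- Let a, β ≥ 0, γ > 0, δ ∈ (0,1], and let f : ℝ × ℝ → ℝ. Assume (i) |f(y,z) − f(ȳ,z)| ≤ β·|y − ȳ| for all y, ȳ, z ∈ ℝ, and (ii) for all y, z, z̄ ∈ ℝ and all θ ∈ (0,1), f(y, (1−θ)z + θz̄) − θ·f(y, z̄) ≤ (1−θ)·(a + β|y| + γ|z|^{1+δ}). Then for all y₁, y₂, z₁, z₂ ∈ ℝ and all θ ∈ (0,1), f(y₁, z₁) − θ·f(y₂, z₂) ≤ (1−θ)·(a + 2β|y₂| + β|ŷ_θ| + γ|ẑ_θ|^{1+δ}), where ŷ_θ := (y₁ − θy₂)/(1−θ) and ẑ_θ := (z₁ − θz₂)/(1−θ). -/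
/-! Split `f y₁ z₁ - θ f y₂ z₂` as `(f y₁ z₁ - f y₂ z₁) + (f y₂ z₁ - θ f y₂ z₂)`. Since
`z₁ = (1 - θ) ẑ_θ + θ z₂`, the second difference is exactly the left side of the θ-convexity
condition at `(y₂, ẑ_θ, z₂)`, while `y₁ - y₂ = (1 - θ)(ŷ_θ - y₂)` makes the Lipschitz bound on
the first one a multiple of `1 - θ`. -/

lemma one_sub_mul_div_one_sub_add_mul {x y θ : ℝ} (hθ : θ ≠ 1) :
    (1 - θ) * ((x - θ * y) / (1 - θ)) + θ * y = x := by
  rw [mul_div_cancel₀ _ (sub_ne_zero.mpr hθ.symm)]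
  ring

lemma abs_sub_le_one_sub_mul {x y θ : ℝ} (hθ : θ < 1) :
    |x - y| ≤ (1 - θ) * (|(x - θ * y) / (1 - θ)| + |y|) := by
  have hθ' : 0 < 1 - θ := sub_pos.mpr hθ
  calc |x - y| = |(1 - θ) * ((x - θ * y) / (1 - θ) - y)| := by
        rw [mul_sub, mul_div_cancel₀ _ hθ'.ne']
        ring_nf
    _ = (1 - θ) * |(x - θ * y) / (1 - θ) - y| := by rw [abs_mul, abs_of_pos hθ']
    _ ≤ (1 - θ) * (|(x - θ * y) / (1 - θ)| + |y|) := by gcongr; exact abs_sub _ _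

theorem stmt_0_general (a β γ δ : ℝ) (hβ : 0 ≤ β)
    (f : ℝ → ℝ → ℝ)
    (hLip : ∀ y y' z : ℝ, |f y z - f y' z| ≤ β * |y - y'|)
    (hconv : ∀ y z z' θ : ℝ, 0 < θ → θ < 1 →
      f y ((1 - θ) * z + θ * z') - θ * f y z'
        ≤ (1 - θ) * (a + β * |y| + γ * |z| ^ (1 + δ))) :
    ∀ y₁ y₂ z₁ z₂ θ : ℝ, 0 < θ → θ < 1 →
      f y₁ z₁ - θ * f y₂ z₂
        ≤ (1 - θ) * (a + 2 * β * |y₂| + β * |(y₁ - θ * y₂) / (1 - θ)|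
            + γ * |(z₁ - θ * z₂) / (1 - θ)| ^ (1 + δ)) := by
  intro y₁ y₂ z₁ z₂ θ hθ0 hθ1
  have hy : f y₁ z₁ - f y₂ z₁ ≤ β * ((1 - θ) * (|(y₁ - θ * y₂) / (1 - θ)| + |y₂|)) :=
    calc f y₁ z₁ - f y₂ z₁ ≤ |f y₁ z₁ - f y₂ z₁| := le_abs_self _
      _ ≤ β * |y₁ - y₂| := hLip y₁ y₂ z₁
      _ ≤ _ := mul_le_mul_of_nonneg_left (abs_sub_le_one_sub_mul hθ1) hβ
  have hz : f y₂ z₁ - θ * f y₂ z₂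
      ≤ (1 - θ) * (a + β * |y₂| + γ * |(z₁ - θ * z₂) / (1 - θ)| ^ (1 + δ)) := by
    simpa only [one_sub_mul_div_one_sub_add_mul hθ1.ne] using
      hconv y₂ ((z₁ - θ * z₂) / (1 - θ)) z₂ θ hθ0 hθ1
  linear_combination hy + hz

/-- From the Lipschitz condition in `y` and the one-sided θ-convexity
condition in `z` (hypothesis (H2.4)), one deduces the combined one-sided estimate. -/
theorem stmt_0 (a β γ δ : ℝ) (ha : 0 ≤ a) (hβ : 0 ≤ β) (hγ : 0 < γ)
    (hδ0 : 0 < δ) (hδ1 : δ ≤ 1)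
    (f : ℝ → ℝ → ℝ)
    (hLip : ∀ y y' z : ℝ, |f y z - f y' z| ≤ β * |y - y'|)
    (hconv : ∀ y z z' θ : ℝ, 0 < θ → θ < 1 →
      f y ((1 - θ) * z + θ * z') - θ * f y z'
        ≤ (1 - θ) * (a + β * |y| + γ * |z| ^ (1 + δ))) :
    ∀ y₁ y₂ z₁ z₂ θ : ℝ, 0 < θ → θ < 1 →
      f y₁ z₁ - θ * f y₂ z₂
        ≤ (1 - θ) * (a + 2 * β * |y₂| + β * |(y₁ - θ * y₂) / (1 - θ)|
            + γ * |(z₁ - θ * z₂) / (1 - θ)| ^ (1 + δ)) :=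
  stmt_0_general a β γ δ hβ f hLip hconv
end

section
/- Let a, b ≥ 0 and δ ∈ (0,1], and let g : ℝ → ℝ satisfy, for all z, z̄ ∈ ℝ and all θ ∈ (0,1), g((1−θ)z + θz̄) − θ·g(z̄) ≤ (1−θ)·(a + b|z|^{1+δ}). Then for every z₀ ∈ ℝ and every z ∈ ℝ with |z| < 1, one has |g(z₀ + z) − g(z₀)| ≤ (a + 2^δ·b·|z₀|^{1+δ} + |g(z₀)| + 2^δ·b)·|z|. In particular, g is locally Lipschitz continuous on ℝ (hence continuous). -/
/-!
Write a small increment as `z = t * u` with `t = |z|` and `|u| = 1`. The one-sided convexity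
inequality with weight `θ = 1 - t` at the points `z₀ + u`, `z₀` bounds `g (z₀ + z) - g z₀` from
above by `t` times a quantity depending only on `z₀`; with weight `θ = 1 / (1 + t)` at the points
`z₀ - u`, `z₀ + z`, whose combination is `z₀`, it bounds the same difference from below.
The resulting estimate makes `g` continuous, hence its Lipschitz constant at `z₀` depends
continuously on `z₀`, which gives local Lipschitz continuity.
-/

open Real Filter Topology

theorem add_one_rpow_le {x p : ℝ} (hx : 0 ≤ x) (hp : 1 ≤ p) :
    (x + 1) ^ p ≤ 2 ^ (p - 1) * (x ^ p + 1) := by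
  have h := NNReal.coe_le_coe.mpr (NNReal.rpow_add_le_mul_rpow_add_rpow x.toNNReal 1 hp)
  push_cast [NNReal.coe_rpow, Real.coe_toNNReal x hx] at h
  simpa using h

theorem continuous_of_dist_le_mul {α β : Type*} [PseudoMetricSpace α] [PseudoMetricSpace β]
    {f : α → β} {C : α → ℝ} {r : ℝ} (hr : 0 < r)
    (hf : ∀ x y, dist y x < r → dist (f y) (f x) ≤ C x * dist y x) : Continuous f := by
  refine continuous_iff_continuousAt.2 fun x => tendsto_iff_dist_tendsto_zero.2 ?_
  have hlim : Tendsto (fun y => C x * dist y x) (𝓝 x) (𝓝 0) := by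
    simpa using ((tendsto_id (x := 𝓝 x)).dist (tendsto_const_nhds (x := x))).const_mul (C x)
  refine squeeze_zero' (Eventually.of_forall fun _ => dist_nonneg) ?_ hlim
  filter_upwards [Metric.ball_mem_nhds x hr] with y hy using hf x y hy

theorem locallyLipschitz_of_dist_le_mul {α β : Type*} [PseudoMetricSpace α]
    [PseudoMetricSpace β] {f : α → β} {C : α → ℝ} {r : ℝ} (hr : 0 < r) (hC : Continuous C)
    (hf : ∀ x y, dist y x < r → dist (f y) (f x) ≤ C x * dist y x) : LocallyLipschitz f := by
  intro x₀
  obtain ⟨U, hU, hCU⟩ := ((hC.tendsto x₀).eventually_le_const (lt_add_one _)).exists_mem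
  refine ⟨(C x₀ + 1).toNNReal, U ∩ Metric.ball x₀ (r / 2),
    inter_mem hU (Metric.ball_mem_nhds x₀ (half_pos hr)), ?_⟩
  refine LipschitzOnWith.of_dist_le' fun y hy x hx => ?_
  have hxy : dist y x < r := by
    linarith [dist_triangle_right y x x₀, Metric.mem_ball.1 hx.2, Metric.mem_ball.1 hy.2]
  calc dist (f y) (f x) ≤ C x * dist y x := hf x y hxy
    _ ≤ (C x₀ + 1) * dist y x := mul_le_mul_of_nonneg_right (hCU x hx.1) dist_nonneg

def OneSidedConvexWith (F g : ℝ → ℝ) : Prop :=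
  ∀ z z' θ : ℝ, 0 < θ → θ < 1 → g ((1 - θ) * z + θ * z') - θ * g z' ≤ (1 - θ) * F z

namespace OneSidedConvexWith

variable {F g : ℝ → ℝ}

theorem apply_add_mul_sub_le (h : OneSidedConvexWith F g) {t : ℝ} (ht₀ : 0 < t) (ht₁ : t < 1)
    (x u : ℝ) : g (x + t * u) - g x ≤ t * (F (x + u) - g x) := by
  have hθ := h (x + u) x (1 - t) (by linarith) (by linarith)
  rw [show (1 - (1 - t)) * (x + u) + (1 - t) * x = x + t * u by ring] at hθ
  linarith

theorem apply_sub_apply_add_mul_le (h : OneSidedConvexWith F g) {t : ℝ} (ht₀ : 0 < t)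
    (ht₁ : t < 1) (x u : ℝ) : g x - g (x + t * u) ≤ t * (F (x - u) - g x) := by
  have ht : 0 < 1 + t := by linarith
  have hθ := h (x - u) (x + t * u) (1 + t)⁻¹ (inv_pos.2 ht) (inv_lt_one_of_one_lt₀ (by linarith))
  rw [show (1 - (1 + t)⁻¹) * (x - u) + (1 + t)⁻¹ * (x + t * u) = x by field_simp; ring,
    show 1 - (1 + t)⁻¹ = t * (1 + t)⁻¹ by field_simp; ring] at hθ
  have := mul_le_mul_of_nonneg_left hθ ht.le
  field_simp at this
  linarith

theorem abs_apply_add_sub_le (h : OneSidedConvexWith F g) {M x z : ℝ}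
    (hM : ∀ u, |u| = 1 → F (x + u) ≤ M) (hz : |z| < 1) :
    |g (x + z) - g x| ≤ (M + |g x|) * |z| := by
  rcases eq_or_ne z 0 with rfl | hz₀
  · simp
  have ht₀ : 0 < |z| := abs_pos.2 hz₀
  set u : ℝ := z / |z| with hu_def
  have hu : |u| = 1 := by rw [hu_def, abs_div, abs_abs, div_self ht₀.ne']
  have hzu : |z| * u = z := mul_div_cancel₀ z ht₀.ne'
  have hup := h.apply_add_mul_sub_le ht₀ hz x u
  have hlow := h.apply_sub_apply_add_mul_le ht₀ hz x u
  rw [hzu] at hup hlow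
  have hF_add : F (x + u) - g x ≤ M + |g x| := by
    linarith [hM _ hu, neg_abs_le (g x)]
  have hF_sub : F (x - u) - g x ≤ M + |g x| := by
    have hF := hM (-u) (by rwa [abs_neg])
    rw [← sub_eq_add_neg] at hF
    linarith [neg_abs_le (g x)]
  rw [abs_sub_le_iff, mul_comm]
  exact ⟨hup.trans (mul_le_mul_of_nonneg_left hF_add ht₀.le),
    hlow.trans (mul_le_mul_of_nonneg_left hF_sub ht₀.le)⟩

end OneSidedConvexWith

theorem add_mul_abs_add_rpow_le {a b δ x u : ℝ} (hb : 0 ≤ b) (hδ : 0 ≤ δ) (hu : |u| = 1) :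
    a + b * |x + u| ^ (1 + δ) ≤ a + 2 ^ δ * b * |x| ^ (1 + δ) + 2 ^ δ * b := by
  have hp : 1 ≤ 1 + δ := by linarith
  have hxu : |x + u| ≤ |x| + 1 := (abs_add_le x u).trans_eq (by rw [hu])
  have hpow : |x + u| ^ (1 + δ) ≤ 2 ^ δ * (|x| ^ (1 + δ) + 1) := by
    calc |x + u| ^ (1 + δ) ≤ (|x| + 1) ^ (1 + δ) :=
          rpow_le_rpow (abs_nonneg _) hxu (by linarith)
      _ ≤ 2 ^ (1 + δ - 1) * (|x| ^ (1 + δ) + 1) := add_one_rpow_le (abs_nonneg x) hp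
      _ = 2 ^ δ * (|x| ^ (1 + δ) + 1) := by rw [add_sub_cancel_left]
  nlinarith [mul_le_mul_of_nonneg_left hpow hb]

theorem stmt_1_general (a b δ : ℝ) (hb : 0 ≤ b) (hδ0 : 0 < δ)
    (g : ℝ → ℝ)
    (h : ∀ z z' θ : ℝ, 0 < θ → θ < 1 →
      g ((1 - θ) * z + θ * z') - θ * g z' ≤ (1 - θ) * (a + b * |z| ^ (1 + δ))) :
    (∀ z₀ z : ℝ, |z| < 1 →
      |g (z₀ + z) - g z₀|
        ≤ (a + 2 ^ δ * b * |z₀| ^ (1 + δ) + |g z₀| + 2 ^ δ * b) * |z|)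
    ∧ LocallyLipschitz g ∧ Continuous g := by
  have hg : OneSidedConvexWith (fun z => a + b * |z| ^ (1 + δ)) g := h
  set C : ℝ → ℝ := fun x => a + 2 ^ δ * b * |x| ^ (1 + δ) + |g x| + 2 ^ δ * b
  have hest : ∀ z₀ z : ℝ, |z| < 1 → |g (z₀ + z) - g z₀| ≤ C z₀ * |z| := fun z₀ z hz =>
    (hg.abs_apply_add_sub_le (fun _ hu => add_mul_abs_add_rpow_le hb hδ0.le hu) hz).trans_eq
      (by ring)
  have hdist : ∀ x y, dist y x < 1 → dist (g y) (g x) ≤ C x * dist y x := fun x y hxy => by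
    simpa only [Real.dist_eq, add_sub_cancel] using hest x (y - x) (by rwa [← Real.dist_eq])
  have hcont : Continuous g := continuous_of_dist_le_mul one_pos hdist
  have hC : Continuous C := by simp only [C]; fun_prop (disch := positivity)
  exact ⟨hest, locallyLipschitz_of_dist_le_mul one_pos hC hdist, hcont⟩

/-- The one-sided θ-convexity condition (4.3) implies a local Lipschitz
estimate, hence local Lipschitz continuity (and continuity). -/
theorem stmt_1 (a b δ : ℝ) (ha : 0 ≤ a) (hb : 0 ≤ b) (hδ0 : 0 < δ) (hδ1 : δ ≤ 1)
    (g : ℝ → ℝ)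
    (h : ∀ z z' θ : ℝ, 0 < θ → θ < 1 →
      g ((1 - θ) * z + θ * z') - θ * g z' ≤ (1 - θ) * (a + b * |z| ^ (1 + δ))) :
    (∀ z₀ z : ℝ, |z| < 1 →
      |g (z₀ + z) - g z₀|
        ≤ (a + 2 ^ δ * b * |z₀| ^ (1 + δ) + |g z₀| + 2 ^ δ * b) * |z|)
    ∧ LocallyLipschitz g ∧ Continuous g :=
  stmt_1_general a b δ hb hδ0 g h
end
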